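/- arXiv:1602.05343 — 3 statements merged into one kernel-verified Lean document; each statement's English description precedes it below -/
import Mathlib

section
/- Let x, t ∈ ℝ with x ≠ t and 1 - 2tx + t² ≠ 0, and let f : ℝ → ℝ be the function f(s) = (1 - 2sx + s²)⁻¹. Then for every integer N ≥ 1 one has 2^N · N! · f(t)^{N+1} = Σ_{i=1}^{N} a(i,N) · (x - t)^{i-2N} · f^{(i)}(t), where f^{(i)}(t) denotes the i-th derivative of f at t and (x - t)^{i-2N} is an integer (possibly negative) power. -/
/-
The function f satisfies the Riccati-type equation f' = 2 (x - s) f², so differentiating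
2^N N! f^{N+1} gives (x - t) times the left-hand side at N + 1. On the right, differentiating
(x - t)^{i-2N} f^{(i)}(t) gives (2N - i)(x - t)^{i-2N-1} f^{(i)}(t) + (x - t)^{i-2N} f^{(i+1)}(t),
and the recursion for a(i, N) is exactly what regroups these terms into (x - t) times the
right-hand side at N + 1. As the identity at N holds on the open set where
1 - 2sx + s² ≠ 0 and s ≠ x, it may be differentiated, and induction on N concludes.
-/

open Finset Nat
open scoped ContDiff

theorem ContDiffAt.iteratedDeriv_right {𝕜 F : Type*} [NontriviallyNormedField 𝕜]
    [NormedAddCommGroup F] [NormedSpace 𝕜 F] {f : 𝕜 → F} {x : 𝕜} {m n : WithTop ℕ∞} {i : ℕ}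
    (hf : ContDiffAt 𝕜 n f x) (hmn : m + i ≤ n) : ContDiffAt 𝕜 m (iteratedDeriv i f) x := by
  rw [iteratedDeriv_eq_equiv_comp]
  exact (ContinuousMultilinearMap.piFieldEquiv 𝕜 (Fin i) F).symm.toContinuousLinearEquiv
    |>.comp_contDiffAt_iff |>.2 (hf.iteratedFDeriv_right hmn)

theorem ContDiffAt.hasDerivAt_iteratedDeriv {𝕜 F : Type*} [NontriviallyNormedField 𝕜]
    [NormedAddCommGroup F] [NormedSpace 𝕜 F] {f : 𝕜 → F} {x : 𝕜}
    (hf : ContDiffAt 𝕜 ∞ f x) (i : ℕ) :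
    HasDerivAt (iteratedDeriv i f) (iteratedDeriv (i + 1) f x) x := by
  rw [iteratedDeriv_succ]
  refine ((hf.iteratedDeriv_right (m := 1) ?_).differentiableAt one_ne_zero).hasDerivAt
  exact_mod_cast le_top

theorem HasDerivAt.sub_zpow_mul {g : ℝ → ℝ} {g' x t : ℝ} (hg : HasDerivAt g g' t) (hxt : x ≠ t)
    (m : ℤ) :
    HasDerivAt (fun s => (x - s) ^ m * g s)
      (-m * (x - t) ^ (m - 1) * g t + (x - t) ^ m * g') t := by
  have hpow : HasDerivAt (fun s => (x - s) ^ m) (-m * (x - t) ^ (m - 1)) t := by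
    simpa [Function.comp_def] using (hasDerivAt_zpow m (x - t) (.inl (sub_ne_zero.2 hxt))).comp t
      ((hasDerivAt_id t).const_sub x)
  exact hpow.mul hg

theorem Finset.sum_Icc_one_eq_sum_range {M : Type*} [AddCommMonoid M] (g : ℕ → M) (n : ℕ) :
    ∑ i ∈ Icc 1 n, g i = ∑ k ∈ range n, g (k + 1) := by
  rw [range_eq_Ico, sum_Ico_add' g]
  -- on ℕ, `Icc 1 n` and `Ico (0 + 1) (n + 1)` are the same list by definition
  rfl

theorem sum_Icc_succ_eq_of_rec {R : Type*} [CommRing R] (a : ℕ → ℕ → R) (N : ℕ) (hN : 1 ≤ N)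
    (ha1 : a 1 (N + 1) = (2 * (N : R) - 1) * a 1 N)
    (hadiag : a (N + 1) (N + 1) = a N N)
    (harec : ∀ i : ℕ, 2 ≤ i → i ≤ N → a i (N + 1) = a (i - 1) N + (2 * (N : R) - i) * a i N)
    (y : ℕ → R) :
    ∑ i ∈ Icc 1 (N + 1), a i (N + 1) * y i =
      ∑ i ∈ Icc 1 N, a i N * ((2 * (N : R) - i) * y i + y (i + 1)) := by
  obtain ⟨M, rfl⟩ := Nat.exists_eq_add_of_le' hN
  have hmid : ∀ k ∈ range M, a (k + 1 + 1) (M + 1 + 1) * y (k + 1 + 1) =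
      a (k + 1 + 1) (M + 1) * ((2 * ((M + 1 : ℕ) : R) - (k + 1 + 1 : ℕ)) * y (k + 1 + 1)) +
        a (k + 1) (M + 1) * y (k + 1 + 1) := by
    intro k hk
    rw [harec (k + 1 + 1) (by omega) (by simp only [mem_range] at hk; omega), Nat.add_sub_cancel]
    ring
  simp only [sum_Icc_one_eq_sum_range, mul_add, sum_add_distrib]
  rw [sum_range_succ, sum_range_succ', sum_range_succ' (fun k => a (k + 1) (M + 1) * _),
    sum_range_succ (fun k => a (k + 1) (M + 1) * y _), sum_congr rfl hmid, sum_add_distrib,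
    ha1, hadiag, zero_add, Nat.cast_one]
  ring

section Riccati

variable {f : ℝ → ℝ} {x t : ℝ}

theorem hasDerivAt_two_pow_mul_factorial_mul_pow (hf : HasDerivAt f (2 * (x - t) * f t ^ 2) t)
    (N : ℕ) :
    HasDerivAt (fun s => 2 ^ N * (N ! : ℝ) * f s ^ (N + 1))
      ((x - t) * (2 ^ (N + 1) * ((N + 1)! : ℝ) * f t ^ (N + 1 + 1))) t := by
  refine ((hf.pow (N + 1)).const_mul _).congr_deriv ?_
  rw [factorial_succ]
  push_cast
  ring

theorem hasDerivAt_sum_sub_zpow_mul_iteratedDeriv (a : ℕ → ℕ → ℝ) (hf : ContDiffAt ℝ ∞ f t)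
    (hxt : x ≠ t) (N : ℕ) :
    HasDerivAt (fun s => ∑ i ∈ Icc 1 N, a i N * (x - s) ^ ((i : ℤ) - 2 * N) * iteratedDeriv i f s)
      (∑ i ∈ Icc 1 N, a i N *
        ((2 * (N : ℝ) - i) * ((x - t) ^ ((i : ℤ) - 2 * N - 1) * iteratedDeriv i f t) +
          (x - t) ^ (((i + 1 : ℕ) : ℤ) - 2 * N - 1) * iteratedDeriv (i + 1) f t)) t := by
  simp only [mul_assoc]
  refine HasDerivAt.fun_sum fun i _ => ?_
  refine (((hf.hasDerivAt_iteratedDeriv i).sub_zpow_mul hxt _).const_mul _).congr_deriv ?_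
  rw [show ((i + 1 : ℕ) : ℤ) - 2 * N - 1 = i - 2 * N by push_cast; ring]
  push_cast
  ring

theorem two_pow_mul_factorial_mul_pow_eq_sum (a : ℕ → ℕ → ℝ) (ha11 : a 1 1 = 1)
    (ha1 : ∀ N : ℕ, 1 ≤ N → a 1 (N + 1) = (2 * (N : ℝ) - 1) * a 1 N)
    (hadiag : ∀ N : ℕ, 1 ≤ N → a (N + 1) (N + 1) = a N N)
    (harec : ∀ N i : ℕ, 2 ≤ i → i ≤ N →
      a i (N + 1) = a (i - 1) N + (2 * (N : ℝ) - (i : ℝ)) * a i N)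
    {U : Set ℝ} (hU : IsOpen U) (hxU : x ∉ U) (hf : ContDiffOn ℝ ∞ f U)
    (hf' : ∀ s ∈ U, HasDerivAt f (2 * (x - s) * f s ^ 2) s) (N : ℕ) (hN : 1 ≤ N) :
    ∀ t ∈ U, 2 ^ N * (N ! : ℝ) * f t ^ (N + 1) =
      ∑ i ∈ Icc 1 N, a i N * (x - t) ^ ((i : ℤ) - 2 * N) * iteratedDeriv i f t := by
  induction N, hN using Nat.le_induction with
  | base =>
    intro t ht
    have hxt : x - t ≠ 0 := sub_ne_zero.2 (ne_of_mem_of_not_mem ht hxU).symm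
    simp only [Icc_self, sum_singleton, ha11, iteratedDeriv_one, (hf' t ht).deriv]
    norm_num
    field_simp
  | succ N hN ih =>
    intro t ht
    have hxt : x ≠ t := (ne_of_mem_of_not_mem ht hxU).symm
    have hderiv := (hasDerivAt_two_pow_mul_factorial_mul_pow (hf' t ht) N).unique
      ((hasDerivAt_sum_sub_zpow_mul_iteratedDeriv a (hf.contDiffAt (hU.mem_nhds ht)) hxt N)
        |>.congr_of_eventuallyEq (Filter.eventually_of_mem (hU.mem_nhds ht) ih))
    rw [← sum_Icc_succ_eq_of_rec a N hN (ha1 N hN) (hadiag N hN) (harec N)] at hderiv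
    refine mul_left_cancel₀ (sub_ne_zero.2 hxt) (hderiv.trans ?_)
    rw [mul_sum]
    refine sum_congr rfl fun i _ => ?_
    rw [show (i : ℤ) - 2 * N - 1 = i - 2 * (N + 1 : ℕ) + 1 by push_cast; ring,
      zpow_add_one₀ (sub_ne_zero.2 hxt)]
    ring

end Riccati

theorem hasDerivAt_inv_quadratic (x t : ℝ) (ht : 1 - 2 * t * x + t ^ 2 ≠ 0) :
    HasDerivAt (fun s => (1 - 2 * s * x + s ^ 2)⁻¹)
      (2 * (x - t) * (1 - 2 * t * x + t ^ 2)⁻¹ ^ 2) t := by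
  have hq : HasDerivAt (fun s => 1 - 2 * s * x + s ^ 2) (2 * t - 2 * x) t := by
    refine ((((hasDerivAt_id' t).const_mul 2).mul_const x).const_sub 1).fun_add
      (hasDerivAt_pow 2 t) |>.congr_deriv ?_
    push_cast; ring
  refine (hq.fun_inv ht).congr_deriv ?_
  field_simp
  ring

/-- the nonlinear differential equation
`2^N · N! · f(t)^{N+1} = Σ_{i=1}^N a(i,N) (x-t)^{i-2N} f^{(i)}(t)`
satisfied by `f(s) = (1 - 2sx + s²)⁻¹`, where `a : ℕ → ℕ → ℝ` is the family
defined by the recursion `a(1,1) = 1`, `a(1,N+1) = (2N-1)a(1,N)`,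
`a(N+1,N+1) = a(N,N)`, `a(i,N+1) = a(i-1,N) + (2N-i)a(i,N)` for `2 ≤ i ≤ N`. -/
theorem stmt0
    (a : ℕ → ℕ → ℝ)
    (ha11 : a 1 1 = 1)
    (ha1 : ∀ N : ℕ, 1 ≤ N → a 1 (N + 1) = (2 * (N : ℝ) - 1) * a 1 N)
    (hadiag : ∀ N : ℕ, 1 ≤ N → a (N + 1) (N + 1) = a N N)
    (harec : ∀ N i : ℕ, 2 ≤ i → i ≤ N →
      a i (N + 1) = a (i - 1) N + (2 * (N : ℝ) - (i : ℝ)) * a i N)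
    (x t : ℝ) (hxt : x ≠ t) (hD : 1 - 2 * t * x + t ^ 2 ≠ 0)
    (f : ℝ → ℝ) (hf : ∀ s : ℝ, f s = (1 - 2 * s * x + s ^ 2)⁻¹)
    (N : ℕ) (hN : 1 ≤ N) :
    2 ^ N * (Nat.factorial N : ℝ) * f t ^ (N + 1) =
      ∑ i ∈ Finset.Icc 1 N,
        a i N * (x - t) ^ ((i : ℤ) - 2 * (N : ℤ)) * iteratedDeriv i f t := by
  obtain rfl : f = fun s => (1 - 2 * s * x + s ^ 2)⁻¹ := funext hf
  set U := {s : ℝ | 1 - 2 * s * x + s ^ 2 ≠ 0 ∧ s ≠ x}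
  have hU : IsOpen U := by
    simp only [U, Set.ofPred_and]
    exact (isOpen_ne_fun (by fun_prop) continuous_const).inter
      (isOpen_ne_fun continuous_id continuous_const)
  have hxU : x ∉ U := fun hx => hx.2 rfl
  have hsmooth : ContDiffOn ℝ ∞ (fun s => (1 - 2 * s * x + s ^ 2)⁻¹) U :=
    ContDiffOn.inv (by fun_prop) fun s hs => hs.1
  exact two_pow_mul_factorial_mul_pow_eq_sum a ha11 ha1 hadiag harec hU hxU hsmooth
    (fun s hs => hasDerivAt_inv_quadratic x s hs.1) N hN t ⟨hD, hxt.symm⟩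
end

section
/- For every integer N ≥ 1 and every i with 2 ≤ i ≤ N+1, a(i,N+1) = Σ_{k=0}^{N+1-i} 2^k · (N - i/2)_k · a(i-1, N-k), where (N - i/2)_k is the falling factorial of the real number N - i/2. -/
/-!
For fixed `i`, unrolling `a(i, M+1) = a(i-1, M) + (2M - i) a(i, M)` from `M = N` down to the
diagonal `a(i, i) = a(i-1, i-1)` gives the coefficients `∏_{j<k} (2(N-j) - i)`, and these are
`2^k (N - i/2)_k`.
-/

noncomputable def fallingFactorial (y : ℝ) (k : ℕ) : ℝ :=
  ∏ j ∈ Finset.range k, (y - (j : ℝ))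

@[simp]
lemma fallingFactorial_zero (y : ℝ) : fallingFactorial y 0 = 1 :=
  Finset.prod_range_zero _

lemma fallingFactorial_succ (y : ℝ) (k : ℕ) :
    fallingFactorial y (k + 1) = y * fallingFactorial (y - 1) k := by
  unfold fallingFactorial
  rw [Finset.prod_range_succ', mul_comm]
  congr 1
  · simp
  · exact Finset.prod_congr rfl fun j _ => by push_cast; ring

lemma two_pow_succ_mul_fallingFactorial_add_one (y : ℝ) (k : ℕ) :
    2 ^ (k + 1) * fallingFactorial (y + 1) (k + 1) =
      2 * (y + 1) * (2 ^ k * fallingFactorial y k) := by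
  rw [fallingFactorial_succ, add_sub_cancel_right]
  ring

theorem stmt3_general
    (a : ℕ → ℕ → ℝ)
    (hadiag : ∀ N : ℕ, 1 ≤ N → a (N + 1) (N + 1) = a N N)
    (harec : ∀ N i : ℕ, 2 ≤ i → i ≤ N →
      a i (N + 1) = a (i - 1) N + (2 * (N : ℝ) - (i : ℝ)) * a i N)
    (N i : ℕ) (hi2 : 2 ≤ i) (hiN : i ≤ N + 1) :
    a i (N + 1) =
      ∑ k ∈ Finset.range (N + 2 - i),
        2 ^ k * fallingFactorial ((N : ℝ) - (i : ℝ) / 2) k * a (i - 1) (N - k) := by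
  induction N, (show i - 1 ≤ N by omega) using Nat.le_induction with
  | base =>
    have hdiag := hadiag (i - 1) (by omega)
    rw [Nat.sub_add_cancel (by omega : 1 ≤ i)] at hdiag ⊢
    simp [show i - 1 + 2 - i = 1 by omega, hdiag]
  | succ N _ ih =>
    have hshift : ((N + 1 : ℕ) : ℝ) - i / 2 = (N - i / 2) + 1 := by push_cast; ring
    rw [harec (N + 1) i hi2 (by omega), ih (by omega), show N + 1 + 2 - i = N + 2 - i + 1 by omega,
      Finset.sum_range_succ', hshift]
    simp only [two_pow_succ_mul_fallingFactorial_add_one, Nat.add_sub_add_right, mul_assoc,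
      ← Finset.mul_sum]
    simp only [pow_zero, fallingFactorial_zero, Nat.sub_zero, one_mul]
    push_cast
    ring

/-- for `N ≥ 1` and `2 ≤ i ≤ N+1`,
`a(i,N+1) = Σ_{k=0}^{N+1-i} 2^k (N - i/2)_k a(i-1, N-k)`,
where `a` is the family defined by the recursion `a(1,1) = 1`,
`a(1,N+1) = (2N-1)a(1,N)`, `a(N+1,N+1) = a(N,N)`,
`a(i,N+1) = a(i-1,N) + (2N-i)a(i,N)` for `2 ≤ i ≤ N`. -/
theorem stmt3
    (a : ℕ → ℕ → ℝ)
    (ha11 : a 1 1 = 1)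
    (ha1 : ∀ N : ℕ, 1 ≤ N → a 1 (N + 1) = (2 * (N : ℝ) - 1) * a 1 N)
    (hadiag : ∀ N : ℕ, 1 ≤ N → a (N + 1) (N + 1) = a N N)
    (harec : ∀ N i : ℕ, 2 ≤ i → i ≤ N →
      a i (N + 1) = a (i - 1) N + (2 * (N : ℝ) - (i : ℝ)) * a i N)
    (N i : ℕ) (hN : 1 ≤ N) (hi2 : 2 ≤ i) (hiN : i ≤ N + 1) :
    a i (N + 1) =
      ∑ k ∈ Finset.range (N + 2 - i),
        2 ^ k * fallingFactorial ((N : ℝ) - (i : ℝ) / 2) k * a (i - 1) (N - k) :=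
  stmt3_general a hadiag harec N i hi2 hiN
end

section
/- For every integer N ≥ 1, every integer n ≥ 0, and every real x ≠ 0, Σ_{l=0}^{n} p_l^{(N+1)}(x) · p_{n-l}^{(N+1)}(x) = (1/(2^N · N!)) · Σ_{i=1}^{N} a(i,N) · Σ_{l=0}^{n} C(2N+n-l-i-1, n-l) · U_{l+i}(x) · (l+i)_i · x^{i+l-2N-n}, where x^{i+l-2N-n} is an integer (possibly negative) power of x. -/
/-- `D = 1 - 2x·t + t²` as a formal power series in `t` over `ℝ`. -/
noncomputable def Dser (x : ℝ) : PowerSeries ℝ :=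
  1 - PowerSeries.C (2 * x) * PowerSeries.X + PowerSeries.X ^ 2

/-- The higher-order Chebyshev polynomial of the second kind `U_n^{(α)}(x)`,
the `n`-th coefficient of `(D⁻¹)^α`. -/
noncomputable def chebU (x : ℝ) (α n : ℕ) : ℝ :=
  PowerSeries.coeff n ((Dser x)⁻¹ ^ α)

/-!
Write `u = x - t` and `F = D⁻¹ = L²`, so that `u' = -1` and `F' = 2uF²`. The operator
`G ↦ 2N G + u G'` maps `u^i F^{(i)}` to `(2N - i) u^i F^{(i)} + u^{i+1} F^{(i+1)}`, which is exactly
the recursion defining `a(i, N+1)`, and maps `u^{2N} F^{N+1}` to `2(N+1) u^{2N+2} F^{N+2}`. Hence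
`Σ_i a(i,N) u^i F^{(i)} = 2^N N! u^{2N} F^{N+1}` by induction on `N`. Dividing by `u^{2N}` and
reading off the `n`-th coefficient, with `u^{-m} = Σ_k C(m+k-1, k) x^{-m-k} t^k` and
`[t^l] F^{(i)} = (l+i)_i U_{l+i}`, gives the identity, whose left side is
`[t^n] L^{2N+2} = [t^n] F^{N+1}`.
-/

open PowerSeries Finset
open scoped PowerSeries Nat

theorem sum_Icc_smul_succ_of_rec {V : Type*} [AddCommGroup V] [Module ℝ V]
    (a : ℕ → ℕ → ℝ)
    (ha1 : ∀ N : ℕ, 1 ≤ N → a 1 (N + 1) = (2 * (N : ℝ) - 1) * a 1 N)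
    (hadiag : ∀ N : ℕ, 1 ≤ N → a (N + 1) (N + 1) = a N N)
    (harec : ∀ N i : ℕ, 2 ≤ i → i ≤ N →
      a i (N + 1) = a (i - 1) N + (2 * (N : ℝ) - (i : ℝ)) * a i N)
    (w : ℕ → V) {N : ℕ} (hN : 1 ≤ N) :
    ∑ i ∈ Icc 1 (N + 1), a i (N + 1) • w i =
      ∑ i ∈ Icc 1 N, a i N • ((2 * (N : ℝ) - i) • w i + w (i + 1)) := by
  obtain ⟨M, rfl⟩ : ∃ M, N = M + 1 := ⟨N - 1, by omega⟩
  have hIcc (K : ℕ) (f : ℕ → V) : ∑ i ∈ Icc 1 K, f i = ∑ j ∈ range K, f (j + 1) := by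
    rw [← Ico_add_one_right_eq_Icc, sum_Ico_eq_sum_range]
    simp only [add_comm 1, Nat.add_sub_cancel]
  have hinterior : ∀ j ∈ range M, a (j + 2) (M + 2) • w (j + 2) =
      a (j + 2) (M + 1) • (2 * ((M + 1 : ℕ) : ℝ) - (j + 2 : ℕ)) • w (j + 2) +
        a (j + 1) (M + 1) • w (j + 2) := by
    intro j hj
    rw [harec (M + 1) (j + 2) (by omega) (by rw [mem_range] at hj; omega), smul_smul, ← add_smul,
      show j + 2 - 1 = j + 1 by omega]
    congr 1
    ring
  -- split off the boundary terms `i = 1` (`ha1`) and `i = N + 1` (`hadiag`)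
  simp only [hIcc, smul_add, sum_add_distrib]
  rw [sum_range_succ', sum_range_succ, sum_range_succ' (fun j => a (j + 1) (M + 1) • _),
    sum_range_succ (fun j => a (j + 1) (M + 1) • w (j + 1 + 1)), sum_congr rfl hinterior,
    sum_add_distrib, hadiag (M + 1) (by omega), ha1 (M + 1) (by omega), mul_smul]
  rw [smul_comm (2 * ((M + 1 : ℕ) : ℝ) - 1)]
  simp only [zero_add, Nat.cast_one]
  abel

theorem fallingFactorial_natCast_add (l i : ℕ) :
    fallingFactorial (l + i) i = (l + 1).ascFactorial i := by
  rw [← Nat.add_descFactorial_eq_ascFactorial, Nat.descFactorial_eq_prod_range, Nat.cast_prod,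
    fallingFactorial]
  refine prod_congr rfl fun j hj => ?_
  rw [Nat.cast_sub (by rw [mem_range] at hj; omega)]
  push_cast
  ring

theorem PowerSeries.inv_pow_mul_pow_of_le {k : Type*} [Field k] {f : k⟦X⟧}
    (h : constantCoeff f ≠ 0) {i j : ℕ} (hij : i ≤ j) : f⁻¹ ^ j * f ^ i = f⁻¹ ^ (j - i) := by
  rw [← Nat.sub_add_cancel hij, pow_add, Nat.add_sub_cancel, mul_assoc, ← mul_pow,
    PowerSeries.inv_mul_cancel f h, one_pow, mul_one]

section InvCSubX

variable {k : Type*} [Field k] {x : k}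

theorem C_sub_X_eq_C_mul_rescale (hx : x ≠ 0) : C x - X = C x * rescale x⁻¹ (1 - X : k⟦X⟧) := by
  rw [map_sub, map_one, rescale_X, mul_sub, mul_one, ← mul_assoc, ← map_mul, mul_inv_cancel₀ hx,
    map_one, one_mul]

theorem inv_C_sub_X (hx : x ≠ 0) : (C x - X)⁻¹ = C x⁻¹ * rescale x⁻¹ (mk 1) := by
  rw [PowerSeries.inv_eq_iff_mul_eq_one (by simpa using hx), C_sub_X_eq_C_mul_rescale hx,
    mul_mul_mul_comm, ← map_mul, inv_mul_cancel₀ hx, map_one, one_mul, ← map_mul,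
    mk_one_mul_one_sub_eq_one, map_one]

theorem inv_C_sub_X_pow_succ (hx : x ≠ 0) (m : ℕ) :
    (C x - X)⁻¹ ^ (m + 1) =
      C (x⁻¹ ^ (m + 1)) * rescale x⁻¹ (mk fun j => ((m + j).choose m : k)) := by
  rw [inv_C_sub_X hx, mul_pow, ← map_pow, ← map_pow, mk_one_pow_eq_mk_choose_add]

end InvCSubX

theorem derivative_Dser (x : ℝ) : d⁄dX ℝ (Dser x) = -2 * (C x - X) := by
  simp only [Dser, map_add, map_sub, Derivation.map_one_eq_zero, Derivation.leibniz,
    Derivation.leibniz_pow, derivative_C, derivative_X, smul_eq_mul, nsmul_eq_mul, mul_one,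
    mul_zero, Nat.add_one_sub_one, pow_one, Nat.cast_ofNat]
  rw [map_mul, map_ofNat]
  ring

theorem derivative_inv_Dser (x : ℝ) : d⁄dX ℝ (Dser x)⁻¹ = 2 * (C x - X) * (Dser x)⁻¹ ^ 2 := by
  rw [derivative_inv', derivative_Dser]
  ring

theorem coeff_inv_C_sub_X_pow_mul_iterate_derivative {x : ℝ} (hx : x ≠ 0) (G : ℝ⟦X⟧)
    {m i : ℕ} (hi : i < m) (n : ℕ) :
    coeff n ((C x - X)⁻¹ ^ (m - i) * (d⁄dX ℝ)^[i] G) =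
      ∑ l ∈ range (n + 1), ((m + n - l - i - 1).choose (n - l) : ℝ) * coeff (l + i) G *
        fallingFactorial (l + i) i * x ^ ((i : ℤ) + l - m - n) := by
  obtain ⟨k, hk⟩ : ∃ k, m - i = k + 1 := ⟨m - i - 1, by omega⟩
  rw [hk, inv_C_sub_X_pow_succ hx, mul_comm, coeff_mul, Nat.sum_antidiagonal_eq_sum_range_succ_mk]
  refine sum_congr rfl fun l hl => ?_
  have hln : l ≤ n := Nat.lt_succ_iff.mp (mem_range.mp hl)
  have hpow : x ^ ((i : ℤ) + l - m - n) = x⁻¹ ^ (k + 1) * x⁻¹ ^ (n - l) := by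
    rw [← pow_add, inv_pow, ← zpow_natCast, ← zpow_neg]
    congr 1
    omega
  rw [coeff_iterate_derivative, coeff_C_mul, coeff_rescale, coeff_mk]
  dsimp only
  rw [fallingFactorial_natCast_add, Nat.choose_symm_add,
    show k + (n - l) = m + n - l - i - 1 by omega, hpow]
  ring

section DerivativeIdentity

variable {u F : ℝ⟦X⟧}

theorem mul_derivative_pow_mul (hu : d⁄dX ℝ u = -1) (k : ℕ) (G : ℝ⟦X⟧) :
    u * d⁄dX ℝ (u ^ k * G) = -(k : ℝ) • (u ^ k * G) + u ^ (k + 1) * d⁄dX ℝ G := by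
  rw [Derivation.leibniz, Derivation.leibniz_pow, hu]
  cases k with
  | zero => simp
  | succ k =>
    simp only [smul_eq_mul, nsmul_eq_mul, Nat.add_sub_cancel, Algebra.smul_def, algebraMap_eq,
      map_neg, map_natCast]
    ring

theorem derivative_pow_succ_of_derivative_eq (hF : d⁄dX ℝ F = 2 * u * F ^ 2) (k : ℕ) :
    d⁄dX ℝ (F ^ (k + 1)) = (2 * (k + 1) : ℝ) • (u * F ^ (k + 2)) := by
  rw [Derivation.leibniz_pow, hF]
  simp only [smul_eq_mul, nsmul_eq_mul, Nat.add_sub_cancel, Algebra.smul_def, algebraMap_eq,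
    map_mul, map_add, map_ofNat, map_natCast, map_one]
  push_cast
  ring

theorem sum_smul_pow_mul_iterate_derivative_eq (a : ℕ → ℕ → ℝ)
    (ha11 : a 1 1 = 1)
    (ha1 : ∀ N : ℕ, 1 ≤ N → a 1 (N + 1) = (2 * (N : ℝ) - 1) * a 1 N)
    (hadiag : ∀ N : ℕ, 1 ≤ N → a (N + 1) (N + 1) = a N N)
    (harec : ∀ N i : ℕ, 2 ≤ i → i ≤ N →
      a i (N + 1) = a (i - 1) N + (2 * (N : ℝ) - (i : ℝ)) * a i N)
    (hu : d⁄dX ℝ u = -1) (hF : d⁄dX ℝ F = 2 * u * F ^ 2) {N : ℕ} (hN : 1 ≤ N) :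
    ∑ i ∈ Icc 1 N, a i N • (u ^ i * (d⁄dX ℝ)^[i] F) =
      (2 ^ N * N ! : ℝ) • (u ^ (2 * N) * F ^ (N + 1)) := by
  induction N, hN using Nat.le_induction with
  | base =>
    simp only [Icc_self, sum_singleton, ha11, one_smul, pow_one, Function.iterate_one, hF]
    rw [Nat.factorial_one, Nat.cast_one, mul_one, two_smul]
    ring
  | succ N hN ih =>
    have hstep (i : ℕ) : (2 * (N : ℝ) - i) • (u ^ i * (d⁄dX ℝ)^[i] F) +
        u ^ (i + 1) * (d⁄dX ℝ)^[i + 1] F =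
        (2 * N : ℝ) • (u ^ i * (d⁄dX ℝ)^[i] F) + u * d⁄dX ℝ (u ^ i * (d⁄dX ℝ)^[i] F) := by
      rw [mul_derivative_pow_mul hu, Function.iterate_succ_apply', sub_eq_add_neg, add_smul]
      abel
    calc ∑ i ∈ Icc 1 (N + 1), a i (N + 1) • (u ^ i * (d⁄dX ℝ)^[i] F)
        = ∑ i ∈ Icc 1 N, a i N • ((2 * N : ℝ) • (u ^ i * (d⁄dX ℝ)^[i] F) +
            u * d⁄dX ℝ (u ^ i * (d⁄dX ℝ)^[i] F)) := by
          rw [sum_Icc_smul_succ_of_rec a ha1 hadiag harec _ hN]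
          simp only [hstep]
      _ = (2 * N : ℝ) • ∑ i ∈ Icc 1 N, a i N • (u ^ i * (d⁄dX ℝ)^[i] F) +
            u * d⁄dX ℝ (∑ i ∈ Icc 1 N, a i N • (u ^ i * (d⁄dX ℝ)^[i] F)) := by
          simp only [smul_add, sum_add_distrib, smul_sum, map_sum, Derivation.map_smul, mul_sum,
            mul_smul_comm, smul_comm (2 * (N : ℝ))]
      _ = (2 ^ (N + 1) * (N + 1)! : ℝ) • (u ^ (2 * (N + 1)) * F ^ (N + 1 + 1)) := by
          rw [ih, Derivation.map_smul, mul_smul_comm, mul_derivative_pow_mul hu,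
            derivative_pow_succ_of_derivative_eq hF]
          simp only [smul_eq_C_mul, ← mul_assoc, ← map_mul]
          push_cast [Nat.factorial_succ]
          simp only [map_mul, map_add, map_neg, map_pow, map_natCast, map_ofNat, map_one]
          ring

end DerivativeIdentity

theorem stmt6_general
    (a : ℕ → ℕ → ℝ)
    (ha11 : a 1 1 = 1)
    (ha1 : ∀ N : ℕ, 1 ≤ N → a 1 (N + 1) = (2 * (N : ℝ) - 1) * a 1 N)
    (hadiag : ∀ N : ℕ, 1 ≤ N → a (N + 1) (N + 1) = a N N)
    (harec : ∀ N i : ℕ, 2 ≤ i → i ≤ N →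
      a i (N + 1) = a (i - 1) N + (2 * (N : ℝ) - (i : ℝ)) * a i N)
    (x : ℝ) (hx : x ≠ 0)
    (L : PowerSeries ℝ)
    (hL : L ^ 2 * Dser x = 1)
    (N n : ℕ) (hN : 1 ≤ N) :
    ∑ l ∈ Finset.range (n + 1),
        PowerSeries.coeff l (L ^ (N + 1)) * PowerSeries.coeff (n - l) (L ^ (N + 1)) =
      (1 / (2 ^ N * (Nat.factorial N : ℝ))) *
        ∑ i ∈ Finset.Icc 1 N, a i N *
          ∑ l ∈ Finset.range (n + 1),
            (Nat.choose (2 * N + n - l - i - 1) (n - l) : ℝ) *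
              chebU x 1 (l + i) *
              fallingFactorial ((l : ℝ) + (i : ℝ)) i *
              x ^ ((i : ℤ) + (l : ℤ) - 2 * (N : ℤ) - (n : ℤ)) := by
  set F := (Dser x)⁻¹
  have hD : constantCoeff (Dser x) ≠ 0 := by simp [Dser]
  have hu : constantCoeff (C x - X) ≠ 0 := by simpa using hx
  have hL2 : L ^ 2 = F := (PowerSeries.eq_inv_iff_mul_eq_one hD).mpr hL
  have hLHS : ∑ l ∈ range (n + 1), coeff l (L ^ (N + 1)) * coeff (n - l) (L ^ (N + 1)) =
      coeff n (F ^ (N + 1)) := by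
    rw [← hL2, ← pow_mul, show 2 * (N + 1) = N + 1 + (N + 1) by ring, pow_add L (N + 1),
      coeff_mul, Nat.sum_antidiagonal_eq_sum_range_succ_mk]
  have hsum : ∑ i ∈ Icc 1 N, a i N • ((C x - X)⁻¹ ^ (2 * N - i) * (d⁄dX ℝ)^[i] F) =
      (2 ^ N * N ! : ℝ) • F ^ (N + 1) :=
    calc _ = (C x - X)⁻¹ ^ (2 * N) * ∑ i ∈ Icc 1 N, a i N • ((C x - X) ^ i * (d⁄dX ℝ)^[i] F) := by
          rw [mul_sum]
          refine sum_congr rfl fun i hi => ?_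
          rw [mul_smul_comm, ← mul_assoc, inv_pow_mul_pow_of_le hu (by rw [mem_Icc] at hi; omega)]
      _ = (C x - X)⁻¹ ^ (2 * N) * (2 ^ N * N ! : ℝ) • ((C x - X) ^ (2 * N) * F ^ (N + 1)) := by
          rw [sum_smul_pow_mul_iterate_derivative_eq a ha11 ha1 hadiag harec (by simp)
            (derivative_inv_Dser x) hN]
      _ = _ := by
          rw [mul_smul_comm, ← mul_assoc, inv_pow_mul_pow_of_le hu le_rfl, Nat.sub_self, pow_zero,
            one_mul]
  have hcoeff := congrArg (coeff n) hsum
  simp only [map_sum, coeff_smul, smul_eq_mul] at hcoeff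
  rw [hLHS, one_div, eq_inv_mul_iff_mul_eq₀ (by positivity), ← hcoeff]
  refine sum_congr rfl fun i hi => ?_
  rw [coeff_inv_C_sub_X_pow_mul_iterate_derivative hx F (by rw [mem_Icc] at hi; omega)]
  simp only [chebU, pow_one, Nat.cast_ofNat, Nat.cast_mul]
  rfl

/-- for `N ≥ 1`, `n ≥ 0` and real `x ≠ 0`,
`Σ_{l=0}^n p_l^{(N+1)}(x) p_{n-l}^{(N+1)}(x) = (1/(2^N N!)) Σ_{i=1}^N a(i,N)
  Σ_{l=0}^n C(2N+n-l-i-1, n-l) U_{l+i}(x) (l+i)_i x^{i+l-2N-n}`,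
where the higher-order Legendre polynomial `p_n^{(α)}(x)` is the `n`-th
coefficient of `L^α` for the unique power series `L` with constant coefficient
`1` and `L² D = 1`, and `a` is the family defined by the recursion
`a(1,1) = 1`, `a(1,N+1) = (2N-1)a(1,N)`, `a(N+1,N+1) = a(N,N)`,
`a(i,N+1) = a(i-1,N) + (2N-i)a(i,N)` for `2 ≤ i ≤ N`. -/
theorem stmt6
    (a : ℕ → ℕ → ℝ)
    (ha11 : a 1 1 = 1)
    (ha1 : ∀ N : ℕ, 1 ≤ N → a 1 (N + 1) = (2 * (N : ℝ) - 1) * a 1 N)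
    (hadiag : ∀ N : ℕ, 1 ≤ N → a (N + 1) (N + 1) = a N N)
    (harec : ∀ N i : ℕ, 2 ≤ i → i ≤ N →
      a i (N + 1) = a (i - 1) N + (2 * (N : ℝ) - (i : ℝ)) * a i N)
    (x : ℝ) (hx : x ≠ 0)
    (L : PowerSeries ℝ) (hL0 : PowerSeries.constantCoeff L = 1)
    (hL : L ^ 2 * Dser x = 1)
    (N n : ℕ) (hN : 1 ≤ N) :
    ∑ l ∈ Finset.range (n + 1),
        PowerSeries.coeff l (L ^ (N + 1)) * PowerSeries.coeff (n - l) (L ^ (N + 1)) =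
      (1 / (2 ^ N * (Nat.factorial N : ℝ))) *
        ∑ i ∈ Finset.Icc 1 N, a i N *
          ∑ l ∈ Finset.range (n + 1),
            (Nat.choose (2 * N + n - l - i - 1) (n - l) : ℝ) *
              chebU x 1 (l + i) *
              fallingFactorial ((l : ℝ) + (i : ℝ)) i *
              x ^ ((i : ℤ) + (l : ℤ) - 2 * (N : ℤ) - (n : ℤ)) :=
  stmt6_general a ha11 ha1 hadiag harec x hx L hL N n hN
end
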